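/- Let F : (0,∞) → (0,∞) be continuous, strictly increasing with lim_{t→∞} F(t) = ∞, let U : ℝ² → (0,∞) be measurable with lim_{|x|→∞} F(1/U(x))/|x| = 1, and let ℓ > 0. Then for every ε ∈ (0,1) there exists R > 0 such that for all x ∈ ℝ² with |x| > R, ∫_{|y| ≤ ε|x|} U(x−y) |φ₀(y)|² dy ≤ 1/F^{-1}((1−ε)²|x|), where F^{-1} denotes the inverse function of F. -/

import Mathlib

/-!
For `|y| ≤ ε|x|` we have `|x - y| ≥ (1 - ε)|x|`, so once `|x|` is large the decay of `U` gives
`F (1 / U (x - y)) > (1 - ε)|x - y| ≥ (1 - ε)²|x| = F t`, where `t = F⁻¹((1 - ε)²|x|)` exists by the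
intermediate value theorem. Strict monotonicity of `F` turns this into `U (x - y) < 1 / t` on the
whole ball, and averaging against the Gaussian, a probability density, gives the bound.
-/

open MeasureTheory Filter Real

noncomputable section

abbrev E2 := EuclideanSpace ℝ (Fin 2)

/-- The centred Gaussian probability density `|φ₀(x)|² = (2πℓ²)⁻¹ exp(-|x|²/(2ℓ²))` on `ℝ²`. -/
def phiSq (l : ℝ) (x : E2) : ℝ := (2 * π * l ^ 2)⁻¹ * Real.exp (-‖x‖ ^ 2 / (2 * l ^ 2))

open Metric Set

lemma phiSq_nonneg (l : ℝ) (x : E2) : 0 ≤ phiSq l x := by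
  unfold phiSq
  positivity

lemma integral_phiSq {l : ℝ} (hl : l ≠ 0) : ∫ x, phiSq l x = 1 := by
  have hb : 0 < (2 * l ^ 2)⁻¹ := by positivity
  have hrank : (Module.finrank ℝ E2 : ℝ) / 2 = 1 := by simp
  have hexp : ∀ x : E2, -‖x‖ ^ 2 / (2 * l ^ 2) = -(2 * l ^ 2)⁻¹ * ‖x‖ ^ 2 := fun x => by ring
  simp only [phiSq, hexp, integral_const_mul,
    GaussianFourier.integral_rexp_neg_mul_sq_norm hb, hrank, rpow_one]
  field_simp

lemma setIntegral_mul_le_of_integral_eq_one {α : Type*} [MeasurableSpace α] {μ : Measure α}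
    {f g : α → ℝ} {s : Set α} {C : ℝ} (hC : 0 ≤ C) (hs : MeasurableSet s)
    (hf0 : ∀ y ∈ s, 0 ≤ f y) (hfC : ∀ y ∈ s, f y ≤ C) (hg0 : ∀ y, 0 ≤ g y) (hg : ∫ y, g y ∂μ = 1) :
    ∫ y in s, f y * g y ∂μ ≤ C := by
  have hgi : Integrable g μ := .of_integral_ne_zero (by rw [hg]; exact one_ne_zero)
  calc ∫ y in s, f y * g y ∂μ ≤ ∫ y in s, C * g y ∂μ := by
        refine integral_mono_of_nonneg ?_ (hgi.const_mul C).integrableOn ?_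
        · filter_upwards [ae_restrict_mem hs] with y hy using mul_nonneg (hf0 y hy) (hg0 y)
        · filter_upwards [ae_restrict_mem hs] with y hy
          exact mul_le_mul_of_nonneg_right (hfC y hy) (hg0 y)
    _ = C * ∫ y in s, g y ∂μ := integral_const_mul C _
    _ ≤ C * 1 := by
        gcongr
        rw [← hg]
        exact setIntegral_le_integral hgi (.of_forall hg0)
    _ = C := mul_one C

section Asymptotics

variable {E : Type*} [SeminormedAddCommGroup E]

lemma exists_pos_forall_lt_norm_of_eventually {P : E → Prop}
    (h : ∀ᶠ x in comap norm atTop, P x) : ∃ R > 0, ∀ x, R < ‖x‖ → P x := by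
  obtain ⟨M, hM⟩ := eventually_atTop.mp (eventually_comap.mp h)
  exact ⟨max M 1, by positivity, fun x hx => hM ‖x‖ ((le_max_left M 1).trans hx.le) x rfl⟩

lemma mul_norm_le_norm_sub_of_mem_closedBall {ε : ℝ} {x y : E}
    (hy : y ∈ closedBall 0 (ε * ‖x‖)) :
    (1 - ε) * ‖x‖ ≤ ‖x - y‖ := by
  rw [mem_closedBall_zero_iff] at hy
  linarith [norm_sub_norm_le x y]

lemma eventually_forall_closedBall_sub {P : E → Prop} (h : ∀ᶠ z in comap norm atTop, P z)
    {ε : ℝ} (hε : ε < 1) :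
    ∀ᶠ x in comap norm atTop, ∀ y ∈ closedBall 0 (ε * ‖x‖), P (x - y) := by
  obtain ⟨M, hM⟩ := eventually_atTop.mp (eventually_comap.mp h)
  have hlarge : ∀ᶠ x : E in comap norm atTop, M ≤ (1 - ε) * ‖x‖ :=
    (tendsto_comap.const_mul_atTop (sub_pos.mpr hε)).eventually_ge_atTop M
  filter_upwards [hlarge] with x hx y hy
  exact hM _ (hx.trans (mul_norm_le_norm_sub_of_mem_closedBall hy)) _ rfl

lemma eventually_mul_norm_lt_of_tendsto_div_norm {g : E → ℝ}
    (hg : Tendsto (fun z => g z / ‖z‖) (comap norm atTop) (nhds 1)) {a : ℝ} (ha : a < 1) :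
    ∀ᶠ z in comap norm atTop, a * ‖z‖ < g z := by
  filter_upwards [hg.eventually (Ioi_mem_nhds ha), tendsto_comap.eventually_gt_atTop 0]
    with z hz hz0
  exact (lt_div_iff₀ hz0).mp hz

end Asymptotics

theorem stmt_8_general
    (F : ℝ → ℝ)
    (hFcont : ContinuousOn F (Set.Ioi 0))
    (hFmono : StrictMonoOn F (Set.Ioi 0))
    (hFtop : Tendsto F atTop atTop)
    (U : E2 → ℝ)
    (hUpos : ∀ x, 0 < U x)
    (hUdecay : Tendsto (fun x : E2 => F (1 / U x) / ‖x‖)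
      (comap (fun x : E2 => ‖x‖) atTop) (nhds 1))
    (l : ℝ) (hl : 0 < l)
    (Finv : ℝ → ℝ)
    (hFinv : ∀ t > 0, Finv (F t) = t)
    (ε : ℝ) (hε : ε ∈ Set.Ioo (0 : ℝ) 1) :
    ∃ R > 0, ∀ x : E2, R < ‖x‖ →
      ∫ y in Metric.closedBall (0 : E2) (ε * ‖x‖), U (x - y) * phiSq l y ≤
        1 / Finv ((1 - ε) ^ 2 * ‖x‖) := by
  obtain ⟨hε0, hε1⟩ := hε
  have hsurj : Ici (F 1) ⊆ F '' Ioi 0 :=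
    isPreconnected_Ioi.intermediate_value_Ici one_pos (le_principal_iff.mpr (Ioi_mem_atTop 0))
      hFcont hFtop
  have hlarge : ∀ᶠ x : E2 in comap norm atTop, F 1 ≤ (1 - ε) ^ 2 * ‖x‖ :=
    (tendsto_comap.const_mul_atTop (by positivity)).eventually_ge_atTop _
  apply exists_pos_forall_lt_norm_of_eventually
  filter_upwards [eventually_forall_closedBall_sub
    (eventually_mul_norm_lt_of_tendsto_div_norm hUdecay (sub_lt_self 1 hε0)) hε1, hlarge]
    with x hdecay hx
  obtain ⟨t, ht : 0 < t, hFt⟩ := hsurj hx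
  rw [← hFt, hFinv t ht]
  have hU : ∀ y ∈ closedBall 0 (ε * ‖x‖), U (x - y) ≤ 1 / t := by
    intro y hy
    have hFU : F t < F (1 / U (x - y)) := calc
      F t = (1 - ε) * ((1 - ε) * ‖x‖) := by rw [hFt]; ring
      _ ≤ (1 - ε) * ‖x - y‖ := by gcongr; exact mul_norm_le_norm_sub_of_mem_closedBall hy
      _ < F (1 / U (x - y)) := hdecay y hy
    have ht_lt := (hFmono.lt_iff_lt ht (one_div_pos.mpr (hUpos _))).mp hFU
    exact ((lt_one_div (hUpos _) ht).mpr ht_lt).le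
  exact setIntegral_mul_le_of_integral_eq_one (by positivity) measurableSet_closedBall
    (fun y _ => (hUpos _).le) hU (phiSq_nonneg l) (integral_phiSq hl.ne')

/-- Upper bound for the inner part of the Gaussian convolution: for all sufficiently
large `|x|`, `∫_{|y| ≤ ε|x|} U(x-y)|φ₀(y)|² dy ≤ 1/F⁻¹((1-ε)²|x|)`. -/
theorem stmt_8
    (F : ℝ → ℝ)
    (hFpos : ∀ t > 0, 0 < F t)
    (hFcont : ContinuousOn F (Set.Ioi 0))
    (hFmono : StrictMonoOn F (Set.Ioi 0))
    (hFtop : Tendsto F atTop atTop)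
    (U : E2 → ℝ)
    (hUpos : ∀ x, 0 < U x)
    (hUmeas : Measurable U)
    (hUdecay : Tendsto (fun x : E2 => F (1 / U x) / ‖x‖)
      (comap (fun x : E2 => ‖x‖) atTop) (nhds 1))
    (l : ℝ) (hl : 0 < l)
    (Finv : ℝ → ℝ)
    (hFinv : ∀ t > 0, Finv (F t) = t)
    (ε : ℝ) (hε : ε ∈ Set.Ioo (0 : ℝ) 1) :
    ∃ R > 0, ∀ x : E2, R < ‖x‖ →
      ∫ y in Metric.closedBall (0 : E2) (ε * ‖x‖), U (x - y) * phiSq l y ≤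
        1 / Finv ((1 - ε) ^ 2 * ‖x‖) :=
  stmt_8_general F hFcont hFmono hFtop U hUpos hUdecay l hl Finv hFinv ε hε
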